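/- If two pairs of coefficients (μ₁,γ₁) and (μ₂,γ₂) satisfy the two potential identities ω²γ₁μ₁ + (Δ√μ₁)/√μ₁ = ω²γ₂μ₂ + (Δ√μ₂)/√μ₂ and ω²γ₁μ₁ + (Δ√γ₁)/√γ₁ = ω²γ₂μ₂ + (Δ√γ₂)/√γ₂ on Ω, then the pair r = (√μ₁ - √μ₂, √γ₁ - √γ₂) satisfies a linear second-order elliptic system Δr + A·∇r + B·r = 0 on Ω for some matrix-valued functions A₁, A₂, B with locally bounded entries built from μⱼ, γⱼ and their derivatives. -/

import Mathlib

/-!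
Write `uⱼ = √μⱼ`, `vⱼ = √γⱼ` and `c = ω²`. The first identity says that `Δuⱼ / uⱼ + c uⱼ² vⱼ²`
takes the same value `p` for `j = 1, 2`, so `Δuⱼ = (p - c uⱼ² vⱼ²) uⱼ`, and subtracting,
`Δ(u₁ - u₂) = p (u₁ - u₂) - c (v₁² u₁³ - v₂² u₂³)`. The factorisation
`v₁² u₁³ - v₂² u₂³ = v₁² (u₁² + u₁u₂ + u₂²) (u₁ - u₂) + u₂³ (v₁ + v₂) (v₁ - v₂)`
makes the right-hand side linear in `r`; the second identity gives the second row with the roles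
of `u` and `v` exchanged. So `r` solves the system with `A₁ = A₂ = 0` and a matrix `B` that is
continuous on `Ω` (the square roots do not vanish there), hence bounded on compact subsets.
-/

open Complex

noncomputable def pd1 (f : ℝ × ℝ → ℂ) : ℝ × ℝ → ℂ := fun x => fderiv ℝ f x (1, 0)
noncomputable def pd2 (f : ℝ × ℝ → ℂ) : ℝ × ℝ → ℂ := fun x => fderiv ℝ f x (0, 1)
noncomputable def lap (f : ℝ × ℝ → ℂ) : ℝ × ℝ → ℂ := fun x => pd1 (pd1 f) x + pd2 (pd2 f) x

/-- The square root `√μ` of a positive real coefficient, viewed in `ℂ`. -/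
noncomputable def smu (μ : ℝ × ℝ → ℝ) : ℝ × ℝ → ℂ := fun x => (Real.sqrt (μ x) : ℂ)

/-- The principal square root `√γ` of a complex coefficient (well defined for
`Re γ > 0`). -/
noncomputable def sga (γ : ℝ × ℝ → ℂ) : ℝ × ℝ → ℂ := fun x => γ x ^ ((1 : ℂ) / 2)

open Filter Topology Matrix

section Derivatives

variable {E F : Type*} [NormedAddCommGroup E] [NormedSpace ℝ E]
  [NormedAddCommGroup F] [NormedSpace ℝ F]

lemma ContDiffAt.fderiv_apply {f : E → F} {x : E} {n : ℕ} (hf : ContDiffAt ℝ (n + 1) f x)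
    (v : E) : ContDiffAt ℝ n (fun y => fderiv ℝ f y v) x :=
  hf.fderiv_right_succ.clm_apply contDiffAt_const

lemma fderiv_fderiv_apply_sub {f g : E → F} {x : E} (hf : ContDiffAt ℝ 2 f x)
    (hg : ContDiffAt ℝ 2 g x) (v w : E) :
    fderiv ℝ (fun y => fderiv ℝ (fun z => f z - g z) y v) x w =
      fderiv ℝ (fun y => fderiv ℝ f y v) x w - fderiv ℝ (fun y => fderiv ℝ g y v) x w := by
  have hev : (fun y => fderiv ℝ (fun z => f z - g z) y v) =ᶠ[𝓝 x]
      fun y => fderiv ℝ f y v - fderiv ℝ g y v := by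
    filter_upwards [hf.eventually (by simp), hg.eventually (by simp)] with y hfy hgy
    rw [fderiv_fun_sub (hfy.differentiableAt (by simp)) (hgy.differentiableAt (by simp))]
    rfl
  rw [hev.fderiv_eq, fderiv_fun_sub ((hf.fderiv_apply v).differentiableAt one_ne_zero)
    ((hg.fderiv_apply v).differentiableAt one_ne_zero)]
  rfl

end Derivatives

lemma lap_sub {f g : ℝ × ℝ → ℂ} {x : ℝ × ℝ} (hf : ContDiffAt ℝ 2 f x)
    (hg : ContDiffAt ℝ 2 g x) : lap (fun y => f y - g y) x = lap f x - lap g x := by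
  simp only [lap]
  rw [show pd1 (pd1 fun y => f y - g y) x = pd1 (pd1 f) x - pd1 (pd1 g) x from
      fderiv_fderiv_apply_sub hf hg _ _,
    show pd2 (pd2 fun y => f y - g y) x = pd2 (pd2 f) x - pd2 (pd2 g) x from
      fderiv_fderiv_apply_sub hf hg _ _]
  ring

lemma continuousAt_lap {f : ℝ × ℝ → ℂ} {x : ℝ × ℝ} (hf : ContDiffAt ℝ 2 f x) :
    ContinuousAt (lap f) x :=
  (((hf.fderiv_apply (1, 0)).fderiv_apply (1, 0)).continuousAt).add
    ((hf.fderiv_apply (0, 1)).fderiv_apply (0, 1)).continuousAt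

lemma smu_sq {μ : ℝ × ℝ → ℝ} {x : ℝ × ℝ} (h : 0 ≤ μ x) : smu μ x ^ 2 = μ x := by
  rw [smu, ← ofReal_pow, Real.sq_sqrt h]

lemma smu_ne_zero {μ : ℝ × ℝ → ℝ} {x : ℝ × ℝ} (h : 0 < μ x) : smu μ x ≠ 0 :=
  ofReal_ne_zero.2 (Real.sqrt_pos.2 h).ne'

lemma contDiffAt_smu {μ : ℝ × ℝ → ℝ} {x : ℝ × ℝ} {n : WithTop ℕ∞}
    (hμ : ContDiffAt ℝ n μ x) (h : μ x ≠ 0) : ContDiffAt ℝ n (smu μ) x :=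
  ofRealCLM.contDiff.contDiffAt.comp x ((Real.contDiffAt_sqrt h).comp x hμ)

lemma sga_sq (γ : ℝ × ℝ → ℂ) (x : ℝ × ℝ) : sga γ x ^ 2 = γ x := by
  simp [sga, one_div]

lemma sga_ne_zero {γ : ℝ × ℝ → ℂ} {x : ℝ × ℝ} (h : γ x ≠ 0) : sga γ x ≠ 0 :=
  fun h0 => h (by rw [← sga_sq γ x, h0, zero_pow two_ne_zero])

lemma contDiffAt_sga {γ : ℝ × ℝ → ℂ} {x : ℝ × ℝ} {n : WithTop ℕ∞}
    (hγ : ContDiffAt ℝ n γ x) (h : γ x ∈ slitPlane) : ContDiffAt ℝ n (sga γ) x :=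
  ((analyticAt_id.cpow analyticAt_const h).contDiffAt.restrict_scalars ℝ).comp x hγ

lemma IsOpen.smu_contDiffAt_ne_zero {Ω : Set (ℝ × ℝ)} (hΩ : IsOpen Ω) {μ : ℝ × ℝ → ℝ}
    {n : WithTop ℕ∞} (hμ : ContDiffOn ℝ n μ Ω) (hpos : ∀ x ∈ Ω, 0 < μ x) :
    ∀ x ∈ Ω, ContDiffAt ℝ n (smu μ) x ∧ smu μ x ≠ 0 := fun x hx =>
  ⟨contDiffAt_smu (hμ.contDiffAt (hΩ.mem_nhds hx)) (hpos x hx).ne', smu_ne_zero (hpos x hx)⟩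

lemma IsOpen.sga_contDiffAt_ne_zero {Ω : Set (ℝ × ℝ)} (hΩ : IsOpen Ω) {ω : ℝ}
    {ε σ : ℝ × ℝ → ℝ} {γ : ℝ × ℝ → ℂ} {n : WithTop ℕ∞}
    (hγ : ∀ x, γ x = (ε x : ℂ) + I * (σ x : ℂ) / (ω : ℂ))
    (hε : ContDiffOn ℝ n ε Ω) (hσ : ContDiffOn ℝ n σ Ω) (hpos : ∀ x ∈ Ω, 0 < ε x) :
    ∀ x ∈ Ω, ContDiffAt ℝ n (sga γ) x ∧ sga γ x ≠ 0 := by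
  intro x hx
  have hre : (γ x).re = ε x := by simp [hγ]
  have hγx : ContDiffAt ℝ n γ x := by
    rw [funext hγ]
    exact (ofRealCLM.contDiff.contDiffAt.comp x (hε.contDiffAt (hΩ.mem_nhds hx))).add
      ((contDiffAt_const.mul (ofRealCLM.contDiff.contDiffAt.comp x
        (hσ.contDiffAt (hΩ.mem_nhds hx)))).div_const _)
  refine ⟨contDiffAt_sga hγx (mem_slitPlane_iff.2 (Or.inl (hre ▸ hpos x hx))),
    sga_ne_zero fun h0 => (hpos x hx).ne' ?_⟩
  rw [← hre, h0, zero_re]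

def couplingMatrix {K : Type*} [Field K] (c u₁ u₂ v₁ v₂ Lu Lv : K) : Matrix (Fin 2) (Fin 2) K :=
  !![c * v₁ ^ 2 * (u₁ ^ 2 + u₁ * u₂ + u₂ ^ 2) - (c * v₂ ^ 2 * u₂ ^ 2 + Lu / u₂),
      c * u₂ ^ 3 * (v₁ + v₂);
    c * v₂ ^ 3 * (u₁ + u₂),
      c * u₁ ^ 2 * (v₁ ^ 2 + v₁ * v₂ + v₂ ^ 2) - (c * v₂ ^ 2 * u₂ ^ 2 + Lv / v₂)]

lemma add_couplingMatrix_mulVec_eq_zero {K : Type*} [Field K]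
    {c u₁ u₂ v₁ v₂ Lu₁ Lu₂ Lv₁ Lv₂ : K}
    (hu₁ : u₁ ≠ 0) (hu₂ : u₂ ≠ 0) (hv₁ : v₁ ≠ 0) (hv₂ : v₂ ≠ 0)
    (hpu : c * v₁ ^ 2 * u₁ ^ 2 + Lu₁ / u₁ = c * v₂ ^ 2 * u₂ ^ 2 + Lu₂ / u₂)
    (hpv : c * v₁ ^ 2 * u₁ ^ 2 + Lv₁ / v₁ = c * v₂ ^ 2 * u₂ ^ 2 + Lv₂ / v₂) :
    ![Lu₁ - Lu₂, Lv₁ - Lv₂] + couplingMatrix c u₁ u₂ v₁ v₂ Lu₂ Lv₂ *ᵥ ![u₁ - u₂, v₁ - v₂] = 0 := by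
  ext i
  fin_cases i <;>
    simp only [couplingMatrix, mulVec_cons, mulVec_empty, Pi.add_apply, Pi.smul_apply,
      Function.comp_apply, Pi.zero_apply, Fin.zero_eta, Fin.mk_one, cons_val_zero, cons_val_one,
      cons_val_fin_one, head_cons, tail_cons, smul_eq_mul, add_zero]
  · field_simp at hpu ⊢
    linear_combination hpu
  · field_simp at hpv ⊢
    linear_combination hpv

lemma continuousAt_couplingMatrix_apply {X : Type*} [TopologicalSpace X] {c : ℂ}
    {u₁ u₂ v₁ v₂ Lu Lv : X → ℂ} {x : X} (hu₁ : ContinuousAt u₁ x) (hu₂ : ContinuousAt u₂ x)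
    (hv₁ : ContinuousAt v₁ x) (hv₂ : ContinuousAt v₂ x) (hLu : ContinuousAt Lu x)
    (hLv : ContinuousAt Lv x) (hu₂0 : u₂ x ≠ 0) (hv₂0 : v₂ x ≠ 0) (i j : Fin 2) :
    ContinuousAt
      (fun y => couplingMatrix c (u₁ y) (u₂ y) (v₁ y) (v₂ y) (Lu y) (Lv y) i j) x := by
  fin_cases i <;> fin_cases j <;>
    simp only [couplingMatrix, Fin.zero_eta, Fin.mk_one, of_apply, cons_val', cons_val_zero,
      cons_val_one, cons_val_fin_one] <;>
    fun_prop (disch := assumption)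

lemma IsCompact.exists_bound_of_continuousOn_matrix {X 𝕜 m n : Type*} [TopologicalSpace X]
    [SeminormedAddCommGroup 𝕜] [Fintype m] [Fintype n] {K : Set X} (hK : IsCompact K)
    {M : X → Matrix m n 𝕜} (hM : ∀ i j, ContinuousOn (fun x => M x i j) K) :
    ∃ C, ∀ x ∈ K, ∀ i j, ‖M x i j‖ ≤ C := by
  obtain ⟨C, hC⟩ := hK.exists_bound_of_continuousOn (f := fun x => of.symm (M x))
    (continuousOn_pi.2 fun i => continuousOn_pi.2 (hM i))
  exact ⟨C, fun x hx i j =>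
    ((norm_le_pi_norm (M x i) j).trans (norm_le_pi_norm (of.symm (M x)) i)).trans (hC x hx)⟩

theorem exists_elliptic_system_of_potential_eq {Ω : Set (ℝ × ℝ)} {c : ℂ}
    {u₁ u₂ v₁ v₂ : ℝ × ℝ → ℂ}
    (hu₁ : ∀ x ∈ Ω, ContDiffAt ℝ 2 u₁ x ∧ u₁ x ≠ 0) (hu₂ : ∀ x ∈ Ω, ContDiffAt ℝ 2 u₂ x ∧ u₂ x ≠ 0)
    (hv₁ : ∀ x ∈ Ω, ContDiffAt ℝ 2 v₁ x ∧ v₁ x ≠ 0) (hv₂ : ∀ x ∈ Ω, ContDiffAt ℝ 2 v₂ x ∧ v₂ x ≠ 0)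
    (hpu : ∀ x ∈ Ω,
      c * v₁ x ^ 2 * u₁ x ^ 2 + lap u₁ x / u₁ x = c * v₂ x ^ 2 * u₂ x ^ 2 + lap u₂ x / u₂ x)
    (hpv : ∀ x ∈ Ω,
      c * v₁ x ^ 2 * u₁ x ^ 2 + lap v₁ x / v₁ x = c * v₂ x ^ 2 * u₂ x ^ 2 + lap v₂ x / v₂ x) :
    ∃ A₁ A₂ B : ℝ × ℝ → Matrix (Fin 2) (Fin 2) ℂ,
      (∀ K : Set (ℝ × ℝ), IsCompact K → K ⊆ Ω →
        ∃ C : ℝ, ∀ x ∈ K, ∀ i j : Fin 2,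
          ‖A₁ x i j‖ ≤ C ∧ ‖A₂ x i j‖ ≤ C ∧ ‖B x i j‖ ≤ C) ∧
      (∀ x ∈ Ω, ∀ i : Fin 2,
        lap (![fun y => u₁ y - u₂ y, fun y => v₁ y - v₂ y] i) x +
        (∑ j : Fin 2,
          (A₁ x i j * pd1 (![fun y => u₁ y - u₂ y, fun y => v₁ y - v₂ y] j) x +
           A₂ x i j * pd2 (![fun y => u₁ y - u₂ y, fun y => v₁ y - v₂ y] j) x +
           B x i j * (![fun y => u₁ y - u₂ y, fun y => v₁ y - v₂ y] j) x)) = 0) := by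
  refine ⟨0, 0, fun x => couplingMatrix c (u₁ x) (u₂ x) (v₁ x) (v₂ x) (lap u₂ x) (lap v₂ x),
    fun K hK hKΩ => ?_, fun x hx i => ?_⟩
  · obtain ⟨C, hC⟩ := hK.exists_bound_of_continuousOn_matrix fun i j x hx =>
      have hx := hKΩ hx
      (continuousAt_couplingMatrix_apply (hu₁ x hx).1.continuousAt (hu₂ x hx).1.continuousAt
        (hv₁ x hx).1.continuousAt (hv₂ x hx).1.continuousAt (continuousAt_lap (hu₂ x hx).1)
        (continuousAt_lap (hv₂ x hx).1) (hu₂ x hx).2 (hv₂ x hx).2 i j).continuousWithinAt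
    exact ⟨max C 0, fun x hx i j => ⟨by simp, by simp, (hC x hx i j).trans (le_max_left _ _)⟩⟩
  · have hsystem := congrFun (add_couplingMatrix_mulVec_eq_zero (hu₁ x hx).2 (hu₂ x hx).2
      (hv₁ x hx).2 (hv₂ x hx).2 (hpu x hx) (hpv x hx)) i
    fin_cases i
    · simpa [lap_sub (hu₁ x hx).1 (hu₂ x hx).1, mulVec, dotProduct, Fin.sum_univ_two]
        using hsystem
    · simpa [lap_sub (hv₁ x hx).1 (hv₂ x hx).1, mulVec, dotProduct, Fin.sum_univ_two]
        using hsystem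

theorem difference_satisfies_elliptic_system_general
    (Ω : Set (ℝ × ℝ)) (hΩ : IsOpen Ω)
    (ω : ℝ)
    (μ₁ μ₂ ε₁ ε₂ σ₁ σ₂ : ℝ × ℝ → ℝ)
    (hμ₁ : ContDiffOn ℝ 5 μ₁ (closure Ω)) (hμ₂ : ContDiffOn ℝ 5 μ₂ (closure Ω))
    (hε₁ : ContDiffOn ℝ 5 ε₁ (closure Ω)) (hε₂ : ContDiffOn ℝ 5 ε₂ (closure Ω))
    (hσ₁ : ContDiffOn ℝ 5 σ₁ (closure Ω)) (hσ₂ : ContDiffOn ℝ 5 σ₂ (closure Ω))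
    (hμ₁pos : ∀ x ∈ closure Ω, 0 < μ₁ x) (hμ₂pos : ∀ x ∈ closure Ω, 0 < μ₂ x)
    (hε₁pos : ∀ x ∈ closure Ω, 0 < ε₁ x) (hε₂pos : ∀ x ∈ closure Ω, 0 < ε₂ x)
    (γ₁ γ₂ : ℝ × ℝ → ℂ)
    (hγ₁ : ∀ x, γ₁ x = (ε₁ x : ℂ) + I * (σ₁ x : ℂ) / (ω : ℂ))
    (hγ₂ : ∀ x, γ₂ x = (ε₂ x : ℂ) + I * (σ₂ x : ℂ) / (ω : ℂ))
    (hpot1 : ∀ x ∈ Ω,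
      (ω : ℂ) ^ 2 * γ₁ x * (μ₁ x : ℂ) + lap (smu μ₁) x / smu μ₁ x =
      (ω : ℂ) ^ 2 * γ₂ x * (μ₂ x : ℂ) + lap (smu μ₂) x / smu μ₂ x)
    (hpot2 : ∀ x ∈ Ω,
      (ω : ℂ) ^ 2 * γ₁ x * (μ₁ x : ℂ) + lap (sga γ₁) x / sga γ₁ x =
      (ω : ℂ) ^ 2 * γ₂ x * (μ₂ x : ℂ) + lap (sga γ₂) x / sga γ₂ x) :
    ∃ A₁ A₂ B : ℝ × ℝ → Matrix (Fin 2) (Fin 2) ℂ,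
      (∀ K : Set (ℝ × ℝ), IsCompact K → K ⊆ Ω →
        ∃ C : ℝ, ∀ x ∈ K, ∀ i j : Fin 2,
          ‖A₁ x i j‖ ≤ C ∧ ‖A₂ x i j‖ ≤ C ∧ ‖B x i j‖ ≤ C) ∧
      (∀ x ∈ Ω, ∀ i : Fin 2,
        lap (![fun y => smu μ₁ y - smu μ₂ y, fun y => sga γ₁ y - sga γ₂ y] i) x +
        (∑ j : Fin 2,
          (A₁ x i j *
              pd1 (![fun y => smu μ₁ y - smu μ₂ y, fun y => sga γ₁ y - sga γ₂ y] j) x +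
           A₂ x i j *
              pd2 (![fun y => smu μ₁ y - smu μ₂ y, fun y => sga γ₁ y - sga γ₂ y] j) x +
           B x i j *
              (![fun y => smu μ₁ y - smu μ₂ y, fun y => sga γ₁ y - sga γ₂ y] j) x)) = 0) := by
  have hreg : ∀ {f : ℝ × ℝ → ℝ}, ContDiffOn ℝ 5 f (closure Ω) → ContDiffOn ℝ 2 f Ω :=
    fun hf => (hf.mono subset_closure).of_le (by norm_num)
  have hpos : ∀ {f : ℝ × ℝ → ℝ}, (∀ x ∈ closure Ω, 0 < f x) → ∀ x ∈ Ω, 0 < f x :=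
    fun hf x hx => hf x (subset_closure hx)
  have hsq : ∀ x ∈ Ω, smu μ₁ x ^ 2 = μ₁ x ∧ smu μ₂ x ^ 2 = μ₂ x := fun x hx =>
    ⟨smu_sq (hpos hμ₁pos x hx).le, smu_sq (hpos hμ₂pos x hx).le⟩
  refine exists_elliptic_system_of_potential_eq (c := (ω : ℂ) ^ 2)
    (hΩ.smu_contDiffAt_ne_zero (hreg hμ₁) (hpos hμ₁pos))
    (hΩ.smu_contDiffAt_ne_zero (hreg hμ₂) (hpos hμ₂pos))
    (hΩ.sga_contDiffAt_ne_zero hγ₁ (hreg hε₁) (hreg hσ₁) (hpos hε₁pos))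
    (hΩ.sga_contDiffAt_ne_zero hγ₂ (hreg hε₂) (hreg hσ₂) (hpos hε₂pos))
    (fun x hx => ?_) (fun x hx => ?_)
  all_goals rw [sga_sq, sga_sq, (hsq x hx).1, (hsq x hx).2]
  exacts [hpot1 x hx, hpot2 x hx]

/-- If the two Schrödinger potentials built from `(μ₁,γ₁)` and `(μ₂,γ₂)` agree, then
`r = (√μ₁ - √μ₂, √γ₁ - √γ₂)` solves a linear second-order system
`Δr + A₁∂₁r + A₂∂₂r + Br = 0` with locally bounded matrix coefficients. -/
theorem difference_satisfies_elliptic_system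
    (Ω : Set (ℝ × ℝ)) (hΩ : IsOpen Ω) (hΩb : Bornology.IsBounded Ω)
    (ω : ℝ) (hω : ω ≠ 0)
    (μ₁ μ₂ ε₁ ε₂ σ₁ σ₂ : ℝ × ℝ → ℝ)
    (hμ₁ : ContDiffOn ℝ 5 μ₁ (closure Ω)) (hμ₂ : ContDiffOn ℝ 5 μ₂ (closure Ω))
    (hε₁ : ContDiffOn ℝ 5 ε₁ (closure Ω)) (hε₂ : ContDiffOn ℝ 5 ε₂ (closure Ω))
    (hσ₁ : ContDiffOn ℝ 5 σ₁ (closure Ω)) (hσ₂ : ContDiffOn ℝ 5 σ₂ (closure Ω))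
    (hμ₁pos : ∀ x ∈ closure Ω, 0 < μ₁ x) (hμ₂pos : ∀ x ∈ closure Ω, 0 < μ₂ x)
    (hε₁pos : ∀ x ∈ closure Ω, 0 < ε₁ x) (hε₂pos : ∀ x ∈ closure Ω, 0 < ε₂ x)
    (γ₁ γ₂ : ℝ × ℝ → ℂ)
    (hγ₁ : ∀ x, γ₁ x = (ε₁ x : ℂ) + I * (σ₁ x : ℂ) / (ω : ℂ))
    (hγ₂ : ∀ x, γ₂ x = (ε₂ x : ℂ) + I * (σ₂ x : ℂ) / (ω : ℂ))
    (hpot1 : ∀ x ∈ Ω,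
      (ω : ℂ) ^ 2 * γ₁ x * (μ₁ x : ℂ) + lap (smu μ₁) x / smu μ₁ x =
      (ω : ℂ) ^ 2 * γ₂ x * (μ₂ x : ℂ) + lap (smu μ₂) x / smu μ₂ x)
    (hpot2 : ∀ x ∈ Ω,
      (ω : ℂ) ^ 2 * γ₁ x * (μ₁ x : ℂ) + lap (sga γ₁) x / sga γ₁ x =
      (ω : ℂ) ^ 2 * γ₂ x * (μ₂ x : ℂ) + lap (sga γ₂) x / sga γ₂ x) :
    ∃ A₁ A₂ B : ℝ × ℝ → Matrix (Fin 2) (Fin 2) ℂ,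
      (∀ K : Set (ℝ × ℝ), IsCompact K → K ⊆ Ω →
        ∃ C : ℝ, ∀ x ∈ K, ∀ i j : Fin 2,
          ‖A₁ x i j‖ ≤ C ∧ ‖A₂ x i j‖ ≤ C ∧ ‖B x i j‖ ≤ C) ∧
      (∀ x ∈ Ω, ∀ i : Fin 2,
        lap (![fun y => smu μ₁ y - smu μ₂ y, fun y => sga γ₁ y - sga γ₂ y] i) x +
        (∑ j : Fin 2,
          (A₁ x i j *
              pd1 (![fun y => smu μ₁ y - smu μ₂ y, fun y => sga γ₁ y - sga γ₂ y] j) x +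
           A₂ x i j *
              pd2 (![fun y => smu μ₁ y - smu μ₂ y, fun y => sga γ₁ y - sga γ₂ y] j) x +
           B x i j *
              (![fun y => smu μ₁ y - smu μ₂ y, fun y => sga γ₁ y - sga γ₂ y] j) x)) = 0) :=
  difference_satisfies_elliptic_system_general Ω hΩ ω μ₁ μ₂ ε₁ ε₂ σ₁ σ₂ hμ₁ hμ₂ hε₁ hε₂ hσ₁ hσ₂
    hμ₁pos hμ₂pos hε₁pos hε₂pos γ₁ γ₂ hγ₁ hγ₂ hpot1 hpot2
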